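/- If G is a connected finite simple graph with H(G) = 5/2, then G is isomorphic to the 5-cycle C₅. -/

import Mathlib

noncomputable section

/-- `g : [q]^V → [q]` depends essentially on coordinate `u`: there exist two inputs that
differ only at coordinate `u` on which `g` takes different values. -/
def DependsOnCoord {V : Type*} {q : ℕ} (g : (V → Fin q) → Fin q) (u : V) : Prop :=
  ∃ a b : V → Fin q, (∀ w, w ≠ u → a w = b w) ∧ g a ≠ g b

/-- The interaction graph of `f` is contained in the simple graph `G`
(viewed as the symmetric loopless digraph with arcs `(u,v)` and `(v,u)` for every edge `uv`). -/
def IGLe {V : Type*} {q : ℕ} (G : SimpleGraph V) (f : (V → Fin q) → (V → Fin q)) : Prop :=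
  ∀ u v : V, DependsOnCoord (fun x => f x v) u → G.Adj u v

/-- The `q`-ary guessing number of a simple graph `G`: the maximum of `log_q |Fix(f)|`
over all `f` whose interaction graph is contained in `G`. -/
def guessing {V : Type*} (G : SimpleGraph V) (q : ℕ) : ℝ :=
  sSup {x : ℝ | ∃ f : (V → Fin q) → (V → Fin q),
    IGLe G f ∧ x = Real.logb q (Set.ncard {p : V → Fin q | f p = p})}

/-- The entropy of a simple graph: the supremum over `q ≥ 2` of its `q`-guessing numbers. -/
def graphEntropy {V : Type*} (G : SimpleGraph V) : ℝ :=
  sSup {x : ℝ | ∃ q : ℕ, 2 ≤ q ∧ x = guessing G q}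

/-- The set of all entropies of finite simple graphs. -/
def entropySet : Set ℝ := {x : ℝ | ∃ (n : ℕ) (G : SimpleGraph (Fin n)), graphEntropy G = x}

/-- A finite simple graph is entropy-minimal if no simple graph with fewer vertices has the same
fractional part of the entropy. -/
def EntropyMinimal {n : ℕ} (G : SimpleGraph (Fin n)) : Prop :=
  ∀ m : ℕ, m < n → ∀ G' : SimpleGraph (Fin m),
    Int.fract (graphEntropy G') ≠ Int.fract (graphEntropy G)

/-!
Entropy is at most the size of any vertex cover: a fixed point is determined by its values on the
cover. Conversely, vertex-disjoint cliques `K₁, …, Kₘ` give entropy at least `∑ (|Kᵢ| - 1)`: if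
every vertex of a clique guesses minus the sum of the other values on its clique, all words that
vanish off the cliques and sum to zero on each clique are fixed. So `H(G) = 5/2` leaves no
vertex cover of size two, no three disjoint edges, no triangle disjoint from an edge and no `K₄`.
Such a graph is triangle-free; two disjoint edges then extend to a path on four vertices, which
closes up into a 5-cycle. This 5-cycle is induced by triangle-freeness, and by connectedness any
further vertex would give a third edge disjoint from two edges of the cycle.
-/

open Finset SimpleGraph Function

variable {V : Type*} {q : ℕ}

section DependsOnCoord

variable {g : (V → Fin q) → Fin q} {s : Set V}

theorem DependsOnCoord.mem_of_dependsOn {u : V} (hu : DependsOnCoord g u) (hg : DependsOn g s) :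
    u ∈ s := by
  by_contra hus
  obtain ⟨a, b, hab, hne⟩ := hu
  exact hne (hg fun w hw => hab w (ne_of_mem_of_not_mem hw hus))

theorem dependsOn_of_forall_dependsOnCoord [Finite V] (h : ∀ u, DependsOnCoord g u → u ∈ s) :
    DependsOn g s := by
  classical
  cases nonempty_fintype V
  -- change `a` into `b` one coordinate outside `s` at a time
  suffices key :
      ∀ D : Finset V, (∀ w ∈ D, w ∉ s) → ∀ a b, (∀ w ∉ D, a w = b w) → g a = g b from
    fun a b hab => key {w | w ∉ s} (by simp) a b fun w hw => hab w (by simpa using hw)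
  intro D
  induction D using Finset.induction_on with
  | empty => exact fun _ a b hab => congrArg g (funext fun w => hab w (notMem_empty w))
  | insert u D _ ih =>
    intro hD a b hab
    have hus : u ∉ s := hD u (mem_insert_self u D)
    calc g a = g (Function.update a u (b u)) := by
          by_contra hne
          exact hus (h u ⟨_, _, fun w hw => (Function.update_of_ne hw _ _).symm, hne⟩)
      _ = g b := by
          refine ih (fun w hw => hD w (mem_insert_of_mem hw)) _ _ fun w hw => ?_
          rcases eq_or_ne w u with rfl | hwu
          · simp
          · rw [Function.update_of_ne hwu]
            exact hab w (by simp [hwu, hw])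

end DependsOnCoord

section IGLe

variable {G : SimpleGraph V} {f : (V → Fin q) → V → Fin q}

theorem igLe_iff_dependsOn [Finite V] :
    IGLe G f ↔ ∀ v, DependsOn (fun x => f x v) {u | G.Adj u v} :=
  ⟨fun hf _ => dependsOn_of_forall_dependsOnCoord fun u hu => hf u _ hu,
    fun hf _ v hu => hu.mem_of_dependsOn (hf v)⟩

theorem igLe_const (c : V → Fin q) : IGLe G fun _ => c :=
  fun u v hu => absurd (hu.mem_of_dependsOn (dependsOn_const (c v))) (Set.notMem_empty u)

end IGLe

section Bounds

variable [Fintype V] {G : SimpleGraph V} {f : (V → Fin q) → V → Fin q}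

theorem ncard_fixedPoints_le_of_isVertexCover (S : Finset V) (hS : G.IsVertexCover S)
    (hf : IGLe G f) : {p | f p = p}.ncard ≤ q ^ S.card := by
  have hinj : Set.InjOn (fun p (v : S) => p v) {p | f p = p} := by
    intro p hp p' hp' hpp'
    funext v
    by_cases hv : v ∈ S
    · exact congrFun hpp' ⟨v, hv⟩
    have hN : {u | G.Adj u v} ⊆ S := fun u huv => (hS huv).resolve_right hv
    calc p v = f p v := (congrFun hp v).symm
      _ = f p' v := (igLe_iff_dependsOn.1 hf v).mono hN fun u hu => congrFun hpp' ⟨u, hu⟩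
      _ = p' v := congrFun hp' v
  calc {p | f p = p}.ncard ≤ (Set.univ : Set (S → Fin q)).ncard :=
        Set.ncard_le_ncard_of_injOn _ (fun _ _ => Set.mem_univ _) hinj Set.finite_univ
    _ = q ^ S.card := by simp [Set.ncard_univ, Nat.card_fun]

theorem logb_le_of_le_pow {b m k : ℕ} (hb : 1 < b) (h : m ≤ b ^ k) : Real.logb b m ≤ k := by
  rcases m.eq_zero_or_pos with rfl | hm
  · simp
  rw [Real.logb_le_iff_le_rpow (by exact_mod_cast hb) (by exact_mod_cast hm)]
  exact_mod_cast h

theorem guessing_le_of_isVertexCover (hq : 2 ≤ q) (S : Finset V) (hS : G.IsVertexCover S) :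
    guessing G q ≤ S.card :=
  csSup_le ⟨_, _, igLe_const fun _ => ⟨0, by omega⟩, rfl⟩ fun _ ⟨_, hf, hx⟩ =>
    hx ▸ logb_le_of_le_pow hq (ncard_fixedPoints_le_of_isVertexCover S hS hf)

theorem graphEntropy_le_of_isVertexCover (S : Finset V) (hS : G.IsVertexCover S) :
    graphEntropy G ≤ S.card :=
  csSup_le ⟨_, 2, le_rfl, rfl⟩ fun _ ⟨_, hq, hx⟩ =>
    hx ▸ guessing_le_of_isVertexCover hq S hS

theorem logb_ncard_fixedPoints_le_guessing (hq : 2 ≤ q) (hf : IGLe G f) :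
    Real.logb q {p | f p = p}.ncard ≤ guessing G q :=
  le_csSup ⟨Fintype.card V, fun _ ⟨_, hg, hx⟩ => hx ▸ by
      simpa using logb_le_of_le_pow hq (ncard_fixedPoints_le_of_isVertexCover univ (by simp) hg)⟩
    ⟨f, hf, rfl⟩

theorem guessing_le_graphEntropy (hq : 2 ≤ q) : guessing G q ≤ graphEntropy G :=
  le_csSup ⟨Fintype.card V, fun _ ⟨_, hq', hx⟩ => hx ▸ by
      simpa using guessing_le_of_isVertexCover hq' univ (G := G) (by simp)⟩
    ⟨q, hq, rfl⟩

end Bounds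

theorem AddMonoidHom.card_le_card_ker_mul {A B : Type*} [AddGroup A] [AddGroup B] [Finite B]
    (φ : A →+ B) : Nat.card A ≤ Nat.card φ.ker * Nat.card B := by
  rw [← φ.ker.card_mul_index, AddSubgroup.index_ker]
  exact Nat.mul_le_mul_left _ (Nat.card_le_card_of_injective _ Subtype.val_injective)

section Cliques

variable [DecidableEq V] [NeZero q] {ι : Type*} [Fintype ι] (K : ι → Finset V)

def cliqueGuess (x : V → Fin q) (v : V) : Fin q :=
  -∑ i, if v ∈ K i then ∑ w ∈ (K i).erase v, x w else 0

variable {K} {G : SimpleGraph V}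

theorem igLe_cliqueGuess [Finite V] (hK : ∀ i, G.IsClique (K i)) :
    IGLe G (cliqueGuess (q := q) K) := by
  refine igLe_iff_dependsOn.2 fun v x y hxy => ?_
  refine congrArg Neg.neg (sum_congr rfl fun i _ => ?_)
  split_ifs with hv
  · exact sum_congr rfl fun w hw => hxy w (hK i (mem_of_mem_erase hw) hv (ne_of_mem_erase hw))
  · rfl

theorem cliqueGuess_eq_self (hdisj : Pairwise (Disjoint on K)) {x : V → Fin q}
    (hout : ∀ v, (∀ i, v ∉ K i) → x v = 0) (hsum : ∀ i, ∑ w ∈ K i, x w = 0) :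
    cliqueGuess K x = x := by
  funext v
  by_cases hv : ∃ i, v ∈ K i
  · obtain ⟨j, hj⟩ := hv
    rw [cliqueGuess, sum_eq_single_of_mem j (mem_univ j) fun i _ hij =>
        if_neg (disjoint_left.1 (hdisj hij.symm) hj), if_pos hj, sum_erase_eq_sub hj, hsum j,
      zero_sub, neg_neg]
  · push Not at hv
    simp [cliqueGuess, hv, hout v hv]

theorem sum_card_sub_card_le_guessing [Fintype V] (hK : ∀ i, G.IsClique (K i))
    (hdisj : Pairwise (Disjoint on K)) (hq : 2 ≤ q) :
    ∑ i, ((K i).card : ℝ) - Fintype.card ι ≤ guessing G q := by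
  set S := univ.biUnion K
  -- the fixed points of `cliqueGuess K` include the kernel of these linear constraints
  let φ : (V → Fin q) →+ (ι → Fin q) × ((Sᶜ : Finset V) → Fin q) :=
    (AddMonoidHom.pi fun i => ∑ w ∈ K i, Pi.evalAddMonoidHom (fun _ => Fin q) w).prod
      (AddMonoidHom.pi fun v => Pi.evalAddMonoidHom (fun _ => Fin q) v.1)
  have hfix : (φ.ker : Set (V → Fin q)) ⊆ {p | cliqueGuess K p = p} := by
    intro x hx
    simp only [SetLike.mem_coe, AddMonoidHom.mem_ker, Prod.ext_iff, funext_iff] at hx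
    refine cliqueGuess_eq_self hdisj (fun v hv => hx.2 ⟨v, by simpa [S] using hv⟩) fun i => ?_
    simpa [φ] using hx.1 i
  have hcount : q ^ S.card ≤ Nat.card φ.ker * q ^ Fintype.card ι := by
    have h := φ.card_le_card_ker_mul
    simp only [Nat.card_prod, Nat.card_fun, Nat.card_eq_fintype_card, Fintype.card_fun,
      Fintype.card_fin, Fintype.card_coe] at h ⊢
    rw [← card_add_card_compl S, pow_add, ← mul_assoc] at h
    exact Nat.le_of_mul_le_mul_right h (by positivity)
  have hS : S.card = ∑ i, (K i).card := card_biUnion fun i _ j _ hij => hdisj hij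
  have hq' : (1 : ℝ) < q := by exact_mod_cast hq
  have hker : (0 : ℝ) < Nat.card φ.ker := by exact_mod_cast Nat.card_pos
  calc ∑ i, ((K i).card : ℝ) - Fintype.card ι ≤ Real.logb q (Nat.card φ.ker) := by
        rw [Real.le_logb_iff_rpow_le hq' hker, Real.rpow_sub (by positivity), Real.rpow_natCast,
          div_le_iff₀ (by positivity), ← Nat.cast_sum, ← hS, Real.rpow_natCast]
        exact_mod_cast hcount
    _ ≤ Real.logb q {p | cliqueGuess K p = p}.ncard := by
        refine Real.logb_le_logb_of_le hq' hker ?_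
        rw [← Nat.card_coe_set_eq]
        exact_mod_cast Set.ncard_le_ncard hfix
    _ ≤ guessing G q := logb_ncard_fixedPoints_le_guessing hq (igLe_cliqueGuess hK)

end Cliques

section Configurations

variable [Fintype V] [DecidableEq V] {G : SimpleGraph V} {a b c d e f : V}

theorem sum_card_sub_card_le_graphEntropy {ι : Type*} [Fintype ι] {K : ι → Finset V}
    (hK : ∀ i, G.IsClique (K i)) (hdisj : Pairwise (Disjoint on K)) :
    ∑ i, ((K i).card : ℝ) - Fintype.card ι ≤ graphEntropy G :=
  (sum_card_sub_card_le_guessing hK hdisj le_rfl).trans (guessing_le_graphEntropy (q := 2) le_rfl)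

theorem three_le_graphEntropy_of_isNClique_four {t : Finset V} (ht : G.IsNClique 4 t) :
    3 ≤ graphEntropy G := by
  have := sum_card_sub_card_le_graphEntropy (K := fun _ : Unit => t) (fun _ => ht.isClique)
    Subsingleton.pairwise
  norm_num [ht.card_eq] at this
  exact this

theorem three_le_graphEntropy_of_isNClique_three_of_adj {t : Finset V} (ht : G.IsNClique 3 t)
    (hab : G.Adj a b) (ha : a ∉ t) (hb : b ∉ t) : 3 ≤ graphEntropy G := by
  have := sum_card_sub_card_le_graphEntropy (G := G) (K := ![t, {a, b}])
    (by simp [Fin.forall_fin_two, ht.isClique, isClique_insert, hab])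
    (by intro i j hij; fin_cases i <;> fin_cases j <;> simp_all [onFun, eq_comm])
  norm_num [Fin.sum_univ_two, ht.card_eq, hab.ne] at this
  exact this

theorem three_le_graphEntropy_of_adj_of_adj_of_adj (hab : G.Adj a b) (hcd : G.Adj c d)
    (hef : G.Adj e f) (h : [a, b, c, d, e, f].Nodup) : 3 ≤ graphEntropy G := by
  simp only [List.nodup_cons, List.mem_cons, List.not_mem_nil, not_or] at h
  have := sum_card_sub_card_le_graphEntropy (G := G) (K := ![{a, b}, {c, d}, {e, f}])
    (by simp [Fin.forall_fin_succ, isClique_insert, hab, hcd, hef])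
    (by intro i j hij; fin_cases i <;> fin_cases j <;> simp_all [onFun, eq_comm])
  norm_num [Fin.sum_univ_three, Matrix.cons_val_two, card_insert_of_notMem, *] at this
  exact this

end Configurations

section Combinatorics

variable {G : SimpleGraph V} {a b c d u w : V} {φ : Fin 5 → V}

attribute [local grind =] List.nodup_cons
attribute [local grind →] SimpleGraph.Adj.ne SimpleGraph.Adj.symm

def NoThreeDisjointEdges (G : SimpleGraph V) : Prop :=
  ∀ ⦃a b c d e f : V⦄, G.Adj a b → G.Adj c d → G.Adj e f → ¬[a, b, c, d, e, f].Nodup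

def NoTriangleDisjointFromEdge (G : SimpleGraph V) : Prop :=
  ∀ t, G.IsNClique 3 t → ∀ ⦃x y⦄, G.Adj x y → x ∉ t → y ∉ t → False

theorem not_adj_of_cliqueFree_three (hG : G.CliqueFree 3) ⦃a b c : V⦄ (hab : G.Adj a b)
    (hbc : G.Adj b c) : ¬G.Adj a c :=
  by classical exact fun hac => hG {a, b, c} (is3Clique_triple_iff.2 ⟨hab, hac, hbc⟩)

theorem exists_adj_of_not_isVertexCover_pair {u v : V} (h : ¬G.IsVertexCover {u, v}) :
    ∃ x y, G.Adj x y ∧ x ≠ u ∧ x ≠ v ∧ y ≠ u ∧ y ≠ v := by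
  simpa [IsVertexCover, not_or, and_assoc] using h

theorem exists_adj_of_adj_of_adj (hcover : ∀ u v, ¬G.IsVertexCover {u, v})
    (hM : NoThreeDisjointEdges G) (hab : G.Adj a b) (hcd : G.Adj c d) (h : [a, b, c, d].Nodup) :
    ∃ w, w ≠ a ∧ w ≠ c ∧ (G.Adj b w ∨ G.Adj d w) := by
  obtain ⟨x, y, hxy, hxa, hxc, hya, hyc⟩ := exists_adj_of_not_isVertexCover_pair (hcover a c)
  by_cases hx : x = b ∨ x = d
  · rcases hx with rfl | rfl
    exacts [⟨y, hya, hyc, .inl hxy⟩, ⟨y, hya, hyc, .inr hxy⟩]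
  by_cases hy : y = b ∨ y = d
  · rcases hy with rfl | rfl
    exacts [⟨x, hxa, hxc, .inl hxy.symm⟩, ⟨x, hxa, hxc, .inr hxy.symm⟩]
  exact absurd (hM hab hcd hxy) (by grind)

theorem exists_adj_of_triangle (hcover : ∀ u v, ¬G.IsVertexCover {u, v})
    (hTE : NoTriangleDisjointFromEdge G)
    (hab : G.Adj a b) (hac : G.Adj a c) (hbc : G.Adj b c) :
    ∃ w, G.Adj c w ∧ w ≠ a ∧ w ≠ b := by
  obtain ⟨x, y, hxy, hxa, hxb, hya, hyb⟩ := exists_adj_of_not_isVertexCover_pair (hcover a b)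
  by_cases hx : x = c
  · exact ⟨y, hx ▸ hxy, hya, hyb⟩
  by_cases hy : y = c
  · exact ⟨x, hy ▸ hxy.symm, hxa, hxb⟩
  classical
  exact (hTE _ (is3Clique_triple_iff.2 ⟨hab, hac, hbc⟩) hxy (by simp [*]) (by simp [*])).elim

theorem false_of_triangle_of_adj_of_adj (hcover : ∀ u v, ¬G.IsVertexCover {u, v})
    (hTE : NoTriangleDisjointFromEdge G) (hK4 : G.CliqueFree 4) (hab : G.Adj a b)
    (hac : G.Adj a c) (hbc : G.Adj b c) (hua : G.Adj u a) (hub : G.Adj u b) (huc : u ≠ c) :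
    False := by
  classical
  obtain ⟨w, hcw, hwa, hwb⟩ := exists_adj_of_triangle hcover hTE hab hac hbc
  rcases eq_or_ne w u with rfl | hwu
  · refine hK4 {a, b, c, w} ?_
    simp [isNClique_iff, isClique_insert, card_insert_of_notMem, hab.ne, hac.ne, hbc.ne, hua.ne',
      hub.ne', huc.symm, hab, hac, hbc, hua.symm, hub.symm, hcw]
  · exact hTE _ (is3Clique_triple_iff.2 ⟨hab, hua.symm, hub.symm⟩) hcw
      (by simp [hac.ne', hbc.ne', huc.symm]) (by simp [hwa, hwb, hwu])

theorem cliqueFree_three_of_noThreeDisjointEdges (hcover : ∀ u v, ¬G.IsVertexCover {u, v})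
    (hTE : NoTriangleDisjointFromEdge G) (hM : NoThreeDisjointEdges G) (hK4 : G.CliqueFree 4) :
    G.CliqueFree 3 := by
  classical
  intro t ht
  obtain ⟨a, b, c, hab, hac, hbc, rfl⟩ := is3Clique_iff.1 ht
  obtain ⟨wa, hwa, hwab, hwac⟩ := exists_adj_of_triangle hcover hTE hbc hab.symm hac.symm
  obtain ⟨wb, hwb, hwba, hwbc⟩ := exists_adj_of_triangle hcover hTE hac hab hbc.symm
  obtain ⟨wc, hwc, hwca, hwcb⟩ := exists_adj_of_triangle hcover hTE hab hac hbc
  have hab' : wa ≠ wb := by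
    rintro rfl
    exact false_of_triangle_of_adj_of_adj hcover hTE hK4 hab hac hbc hwa.symm hwb.symm hwbc
  have hac' : wa ≠ wc := by
    rintro rfl
    exact false_of_triangle_of_adj_of_adj hcover hTE hK4 hac hab hbc.symm hwa.symm hwc.symm hwcb
  have hbc' : wb ≠ wc := by
    rintro rfl
    exact false_of_triangle_of_adj_of_adj hcover hTE hK4 hbc hab.symm hac.symm hwb.symm hwc.symm
      hwca
  exact hM hwa hwb hwc (by grind)

theorem exists_adj_adj_adj_of_adj (hcover : ∀ u v, ¬G.IsVertexCover {u, v})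
    (hM : NoThreeDisjointEdges G) (hab : G.Adj a b) (hcd : G.Adj c d) (h : [a, b, c, d].Nodup)
    (hbw : G.Adj b w) (hwa : w ≠ a) :
    ∃ a b c d, G.Adj a b ∧ G.Adj b c ∧ G.Adj c d ∧ a ≠ c ∧ b ≠ d := by
  by_contra hP
  obtain ⟨y, hyb, hyc, hay | hdy⟩ :=
    exists_adj_of_adj_of_adj hcover hM hab.symm hcd (by grind)
  · exact hP ⟨w, b, a, y, hbw.symm, hab.symm, hay, hwa, hyb.symm⟩
  obtain ⟨z, hzb, hzd, haz | hcz⟩ :=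
    exists_adj_of_adj_of_adj hcover hM hab.symm hcd.symm (by grind)
  · exact hP ⟨w, b, a, z, hbw.symm, hab.symm, haz, hwa, hzb.symm⟩
  · exact hP ⟨y, d, c, z, hdy.symm, hcd.symm, hcz, hyc, hzd.symm⟩

theorem exists_adj_adj_adj [Nonempty V] (hcover : ∀ u v, ¬G.IsVertexCover {u, v})
    (hM : NoThreeDisjointEdges G) :
    ∃ a b c d, G.Adj a b ∧ G.Adj b c ∧ G.Adj c d ∧ a ≠ c ∧ b ≠ d := by
  obtain ⟨v⟩ := ‹Nonempty V›
  obtain ⟨a, b, hab, -⟩ := exists_adj_of_not_isVertexCover_pair (hcover v v)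
  obtain ⟨c, d, hcd, hca, hcb, hda, hdb⟩ := exists_adj_of_not_isVertexCover_pair (hcover a b)
  have h : [a, b, c, d].Nodup := by grind
  obtain ⟨w, hwa, hwc, hbw | hdw⟩ := exists_adj_of_adj_of_adj hcover hM hab hcd h
  · exact exists_adj_adj_adj_of_adj hcover hM hab hcd h hbw hwa
  · exact exists_adj_adj_adj_of_adj hcover hM hcd hab (by grind) hdw hwc

theorem exists_adj_adj_of_adj_adj_adj (hcover : ∀ u v, ¬G.IsVertexCover {u, v})
    (hM : NoThreeDisjointEdges G) (hG : G.CliqueFree 3) (hab : G.Adj a b) (hbc : G.Adj b c)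
    (hcd : G.Adj c d) (hac : a ≠ c) (hbd : b ≠ d) : ∃ u, G.Adj d u ∧ G.Adj u a := by
  have htri := not_adj_of_cliqueFree_three hG
  have h : [a, b, c, d].Nodup := by grind
  by_contra hP
  -- edges avoiding `{a, c}`, `{b, d}` and `{b, c}`: all but one combination give three disjoint
  -- edges (or a triangle), the remaining one closes the 5-cycle
  obtain ⟨u, hua, huc, hbu | hdu⟩ := exists_adj_of_adj_of_adj hcover hM hab hcd h
  · obtain ⟨w, hwb, hwd, haw | hcw⟩ :=
      exists_adj_of_adj_of_adj hcover hM hab.symm hcd.symm (by grind)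
    · exact hM haw hbu hcd (by grind)
    obtain ⟨z, hzb, hzc, haz | hdz⟩ :=
      exists_adj_of_adj_of_adj hcover hM hab.symm hcd (by grind)
    · rcases eq_or_ne z d with rfl | hzd
      · exact hM hbu hcw haz (by grind)
      · exact hM haz hbu hcd (by grind)
    · rcases eq_or_ne z a with rfl | hza
      · exact hM hbu hcw hdz (by grind)
      · exact hM hdz hcw hab (by grind)
  · obtain ⟨w, hwb, hwd, haw | hcw⟩ :=
      exists_adj_of_adj_of_adj hcover hM hab.symm hcd.symm (by grind)
    · rcases eq_or_ne w u with rfl | hwu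
      · exact hP ⟨w, hdu, haw.symm⟩
      · exact hM haw hdu hbc (by grind)
    · exact hM hcw hdu hab (by grind)

theorem adj_iff_cycleGraph_adj (hG : G.CliqueFree 3) (hφ : ∀ i, G.Adj (φ i) (φ (i + 1)))
    (i j : Fin 5) : G.Adj (φ i) (φ j) ↔ (cycleGraph 5).Adj i j := by
  have hfar : ∀ i, ¬G.Adj (φ i) (φ (i + 2)) := fun i => by
    simpa [add_assoc] using not_adj_of_cliqueFree_three hG (hφ i) (hφ (i + 1))
  obtain ⟨k, rfl⟩ : ∃ k, j = i + k := ⟨j - i, by abel⟩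
  rw [cycleGraph_adj, show i - (i + k) = -k by abel, add_sub_cancel_left]
  fin_cases k
  · simp
  · exact iff_of_true (hφ i) (by decide)
  · exact iff_of_false (hfar i) (by decide)
  · exact iff_of_false (by simpa [add_assoc, adj_comm] using hfar (i + 3)) (by decide)
  · exact iff_of_true (by simpa [add_assoc] using (hφ (i + 4)).symm) (by decide)

theorem surjective_of_noThreeDisjointEdges (hconn : G.Connected) (hM : NoThreeDisjointEdges G)
    (hφ : ∀ i, G.Adj (φ i) (φ (i + 1))) (hinj : Injective φ) : Surjective φ := by
  by_contra hsurj
  obtain ⟨v, hv⟩ := not_forall.1 hsurj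
  -- an edge leaving the cycle, together with two disjoint edges of the cycle
  obtain ⟨e, -, ⟨i, hi⟩, hout⟩ :=
    (hconn.preconnected (φ 0) v).some.exists_boundary_dart (Set.range φ) ⟨0, rfl⟩ hv
  refine hM (hi ▸ e.adj) (hφ (i + 1)) (hφ (i + 3)) ?_
  simp only [Set.mem_range, not_exists] at hout
  simp [List.nodup_cons, hinj.eq_iff, add_assoc, Ne.symm (hout _), hout]

theorem nonempty_iso_cycleGraph_five_of_cycle (hconn : G.Connected) (hM : NoThreeDisjointEdges G)
    (hG : G.CliqueFree 3) (hφ : ∀ i, G.Adj (φ i) (φ (i + 1))) (hinj : Injective φ) :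
    Nonempty (G ≃g cycleGraph 5) :=
  ⟨(⟨Equiv.ofBijective φ ⟨hinj, surjective_of_noThreeDisjointEdges hconn hM hφ hinj⟩,
    adj_iff_cycleGraph_adj hG hφ _ _⟩ : cycleGraph 5 ≃g G).symm⟩

theorem nonempty_iso_cycleGraph_five (hconn : G.Connected)
    (hcover : ∀ u v, ¬G.IsVertexCover {u, v}) (hM : NoThreeDisjointEdges G)
    (hTE : NoTriangleDisjointFromEdge G) (hK4 : G.CliqueFree 4) : Nonempty (G ≃g cycleGraph 5) := by
  have hG := cliqueFree_three_of_noThreeDisjointEdges hcover hTE hM hK4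
  have htri := not_adj_of_cliqueFree_three hG
  have := hconn.nonempty
  obtain ⟨a, b, c, d, hab, hbc, hcd, hac, hbd⟩ := exists_adj_adj_adj hcover hM
  obtain ⟨u, hdu, hua⟩ := exists_adj_adj_of_adj_adj_adj hcover hM hG hab hbc hcd hac hbd
  refine nonempty_iso_cycleGraph_five_of_cycle (φ := ![a, b, c, d, u]) hconn hM hG ?_ ?_
  · intro i
    fin_cases i
    exacts [hab, hbc, hcd, hdu, hua]
  · rw [← List.nodup_ofFn]
    simp only [List.ofFn_succ, List.ofFn_zero, Matrix.cons_val_zero, Matrix.cons_val_succ]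
    grind

end Combinatorics

/-- A connected finite simple graph with entropy 5/2 is isomorphic to the 5-cycle. -/
theorem connected_entropy_five_halves_iso_cycle {n : ℕ} (G : SimpleGraph (Fin n))
    (hconn : G.Connected) (hent : graphEntropy G = 5/2) :
    Nonempty (G ≃g SimpleGraph.cycleGraph 5) := by
  have h2 : ¬graphEntropy G ≤ 2 := by norm_num [hent]
  have h3 : ¬3 ≤ graphEntropy G := by norm_num [hent]
  refine nonempty_iso_cycleGraph_five hconn (fun u v hc => h2 ?_)
    (fun _ _ _ _ _ _ hab hcd hef h => h3 (three_le_graphEntropy_of_adj_of_adj_of_adj hab hcd hef h))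
    (fun _ ht _ _ hab ha hb => h3 (three_le_graphEntropy_of_isNClique_three_of_adj ht hab ha hb))
    (fun _ ht => h3 (three_le_graphEntropy_of_isNClique_four ht))
  calc graphEntropy G ≤ ({u, v} : Finset (Fin n)).card :=
        graphEntropy_le_of_isVertexCover _ (by simpa using hc)
    _ ≤ 2 := by exact_mod_cast card_le_two

end
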